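/- Let V be a finite-dimensional complex inner product space and φ : V → V self-adjoint. Let μ, ν ∈ spec(φ) with μ < ν, and let u ∈ V_μ∖{0}, w ∈ V_ν∖{0}. Then the point z = [u + w] ∈ ℙ(V) satisfies lim_{t→−∞} Φ(t,z) = [u] and lim_{t→+∞} Φ(t,z) = [w]. In particular W⁻([u]) ∩ W⁺([w]) ≠ ∅, so any two fixed-point components ℙ(V_μ), ℙ(V_ν) of the projective flow are comparable in the Smale order, the order on components being anti-isomorphic to the natural order on spec(φ). -/

import Mathlib

/-!
On eigenvectors the flow acts by scalars, `e^{tφ}(u + w) = e^{tμ} u + e^{tν} w`, so `Φ(t, [u + w])`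
is the line through `u + e^{t(ν-μ)} w`, and also the line through `w + e^{t(μ-ν)} u`. For `μ < ν`
the first representative tends to `u` as `t → -∞`, the second to `w` as `t → +∞`. Neither ever
vanishes, since eigenspaces of distinct eigenvalues meet only in `0`, so both limits pass to
`ℙ(V)` through the continuous quotient map.
-/

open scoped LinearAlgebra.Projectivization
open Filter

variable {V : Type*} [NormedAddCommGroup V] [InnerProductSpace ℂ V] [FiniteDimensional ℂ V]

/-- The quotient topology on complex projective space. -/
noncomputable instance instTopPV : TopologicalSpace (ℙ ℂ V) :=
  @instTopologicalSpaceQuotient _ (projectivizationSetoid ℂ V) _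

theorem exp_toLinearMap_injective (ψ : V →L[ℂ] V) :
    Function.Injective (NormedSpace.exp ψ).toLinearMap := by
  letI : NormedAlgebra ℚ (V →L[ℂ] V) := NormedAlgebra.restrictScalars ℚ ℝ (V →L[ℂ] V)
  obtain ⟨u, hu⟩ := NormedSpace.isUnit_exp ψ
  intro a b hab
  have h2 : (↑u⁻¹ * ↑u : V →L[ℂ] V) a = (↑u⁻¹ * ↑u : V →L[ℂ] V) b := by
    simp only [ContinuousLinearMap.mul_apply]
    rw [hu]
    exact congrArg _ hab
  simpa [u.inv_mul] using h2

/-- The projective flow generated by a linear map `φ`: `Φ(t, [v]) = [e^{tφ} v]`. -/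
noncomputable def projFlow (φ : V →ₗ[ℂ] V) (t : ℝ) : ℙ ℂ V → ℙ ℂ V :=
  Projectivization.map
    (NormedSpace.exp (t • LinearMap.toContinuousLinearMap φ)).toLinearMap
    (exp_toLinearMap_injective _)

theorem Module.End.add_smul_ne_zero_of_mem_eigenspace {K M : Type*} [Field K] [AddCommGroup M]
    [Module K M] {f : Module.End K M} {μ ν : K} (hμν : μ ≠ ν) {u w : M}
    (hu : u ∈ f.eigenspace μ) (hw : w ∈ f.eigenspace ν) (hu0 : u ≠ 0) (c : K) :
    u + c • w ≠ 0 := by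
  intro h
  refine hu0 (Submodule.disjoint_def.mp (f.disjoint_genEigenspace hμν 1 1) u hu ?_)
  rw [eq_neg_of_add_eq_zero_left h]
  exact neg_mem (Submodule.smul_mem _ c hw)

theorem NormedSpace.exp_apply_of_apply_eq_smul {E : Type*} [NormedAddCommGroup E]
    [NormedSpace ℂ E] [CompleteSpace E] {ψ : E →L[ℂ] E} {z : ℂ} {v : E} (h : ψ v = z • v) :
    NormedSpace.exp ψ v = Complex.exp z • v := by
  have hpow (n : ℕ) : (ψ ^ n) v = z ^ n • v := by
    induction n with
    | zero => simp
    | succ n ih => rw [pow_succ, pow_succ, mul_apply_eq_comp, h, map_smul, ih,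
        smul_smul, mul_comm]
  have hseries : HasSum (fun n => ((n.factorial : ℂ)⁻¹ • ψ ^ n) v) (NormedSpace.exp ψ v) :=
    (NormedSpace.exp_series_hasSum_exp' (𝕂 := ℂ) ψ).mapL (ContinuousLinearMap.apply ℂ E v)
  have hscalar : HasSum (fun n => ((n.factorial : ℂ)⁻¹ • z ^ n) • v) (Complex.exp z • v) := by
    rw [Complex.exp_eq_exp_ℂ]
    exact (NormedSpace.exp_series_hasSum_exp' (𝕂 := ℂ) z).smul_const v
  refine hseries.unique (hscalar.congr_fun fun n => ?_)
  rw [smul_apply, hpow, smul_smul, smul_eq_mul]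

omit [FiniteDimensional ℂ V] in
theorem Projectivization.tendsto_mk {α : Type*} {l : Filter α} {f : α → V} (hf : ∀ a, f a ≠ 0)
    {v : V} (hv : v ≠ 0) (h : Tendsto f l (nhds v)) :
    Tendsto (fun a => Projectivization.mk ℂ (f a) (hf a)) l
      (nhds (Projectivization.mk ℂ v hv)) :=
  (continuous_quotient_mk'.tendsto (⟨v, hv⟩ : {v : V // v ≠ 0})).comp
    (tendsto_subtype_rng.mpr h)

section EigenvectorOrbit

variable {φ : V →ₗ[ℂ] V} {μ ν : ℝ} {u w : V}

theorem exp_smul_apply_of_mem_eigenspace {x : V} {a : ℝ}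
    (hx : x ∈ Module.End.eigenspace φ (a : ℂ)) (t : ℝ) :
    NormedSpace.exp (t • LinearMap.toContinuousLinearMap φ) x = (Real.exp (t * a) : ℂ) • x := by
  rw [Complex.ofReal_exp]
  refine NormedSpace.exp_apply_of_apply_eq_smul ?_
  rw [smul_apply, LinearMap.coe_toContinuousLinearMap', Module.End.mem_eigenspace_iff.mp hx,
    ← Complex.coe_smul, smul_smul, Complex.ofReal_mul]

theorem projFlow_mk_add_of_mem_eigenspace (hu : u ∈ Module.End.eigenspace φ (μ : ℂ))
    (hw : w ∈ Module.End.eigenspace φ (ν : ℂ)) (hz : u + w ≠ 0) (t : ℝ)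
    (ht : u + (Real.exp (t * (ν - μ)) : ℂ) • w ≠ 0) :
    projFlow φ t (Projectivization.mk ℂ (u + w) hz) =
      Projectivization.mk ℂ (u + (Real.exp (t * (ν - μ)) : ℂ) • w) ht := by
  rw [projFlow, Projectivization.map_mk, Projectivization.mk_eq_mk_iff]
  refine ⟨Units.mk0 (Real.exp (t * μ) : ℂ) (by exact_mod_cast (Real.exp_pos _).ne'), ?_⟩
  rw [Units.smul_mk0, ContinuousLinearMap.coe_coe, map_add,
    exp_smul_apply_of_mem_eigenspace hu, exp_smul_apply_of_mem_eigenspace hw, smul_add,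
    smul_smul, ← Complex.ofReal_mul, ← Real.exp_add]
  ring_nf

theorem tendsto_projFlow_mk_add_of_mem_eigenspace {l : Filter ℝ} (hμν : μ ≠ ν)
    (hu : u ∈ Module.End.eigenspace φ (μ : ℂ)) (hw : w ∈ Module.End.eigenspace φ (ν : ℂ))
    (hu0 : u ≠ 0) (hz : u + w ≠ 0) (hl : Tendsto (fun t => t * (ν - μ)) l atBot) :
    Tendsto (fun t => projFlow φ t (Projectivization.mk ℂ (u + w) hz)) l
      (nhds (Projectivization.mk ℂ u hu0)) := by
  have hne := Module.End.add_smul_ne_zero_of_mem_eigenspace (by exact_mod_cast hμν) hu hw hu0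
  have hcoeff : Tendsto (fun t => (Real.exp (t * (ν - μ)) : ℂ)) l (nhds 0) := by
    rw [← Complex.ofReal_zero]
    exact (Complex.continuous_ofReal.tendsto 0).comp (Real.tendsto_exp_atBot.comp hl)
  simp_rw [projFlow_mk_add_of_mem_eigenspace hu hw hz _ (hne _)]
  refine Projectivization.tendsto_mk _ hu0 ?_
  simpa using tendsto_const_nhds.add (hcoeff.smul_const w)

end EigenvectorOrbit

theorem projFlow_connecting_orbit_general
    {V : Type*} [NormedAddCommGroup V] [InnerProductSpace ℂ V] [FiniteDimensional ℂ V]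
    (φ : V →ₗ[ℂ] V)
    (μ ν : ℝ) (hμν : μ < ν)
    (u : V) (hu : u ∈ Module.End.eigenspace φ (μ : ℂ)) (hu0 : u ≠ 0)
    (w : V) (hw : w ∈ Module.End.eigenspace φ (ν : ℂ)) (hw0 : w ≠ 0) :
    ∃ hz : u + w ≠ 0,
      Tendsto (fun t : ℝ => projFlow φ t (Projectivization.mk ℂ (u + w) hz)) atBot
        (nhds (Projectivization.mk ℂ u hu0)) ∧
      Tendsto (fun t : ℝ => projFlow φ t (Projectivization.mk ℂ (u + w) hz)) atTop
        (nhds (Projectivization.mk ℂ w hw0)) ∧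
      ({y : ℙ ℂ V | Tendsto (fun t : ℝ => projFlow φ t y) atBot
            (nhds (Projectivization.mk ℂ u hu0))} ∩
        {y : ℙ ℂ V | Tendsto (fun t : ℝ => projFlow φ t y) atTop
            (nhds (Projectivization.mk ℂ w hw0))}).Nonempty := by
  have hz : u + w ≠ 0 := by
    simpa using Module.End.add_smul_ne_zero_of_mem_eigenspace
      (by exact_mod_cast hμν.ne) hu hw hu0 (1 : ℂ)
  have hbot := tendsto_projFlow_mk_add_of_mem_eigenspace hμν.ne hu hw hu0 hz
    (tendsto_id.atBot_mul_const (sub_pos.mpr hμν))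
  have htop := tendsto_projFlow_mk_add_of_mem_eigenspace hμν.ne' hw hu hw0 (add_comm u w ▸ hz)
    (tendsto_id.atTop_mul_const_of_neg (sub_neg.mpr hμν))
  simp_rw [add_comm w u] at htop
  exact ⟨hz, hbot, htop, _, hbot, htop⟩

/-- For eigenvalues `μ < ν` of a self-adjoint `φ` and nonzero
eigenvectors `u ∈ V_μ`, `w ∈ V_ν`, the point `z = [u+w]` satisfies
`Φ(t,z) → [u]` as `t → −∞` and `Φ(t,z) → [w]` as `t → +∞`; in particular
`W⁻([u]) ∩ W⁺([w]) ≠ ∅`. -/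
theorem projFlow_connecting_orbit
    {V : Type*} [NormedAddCommGroup V] [InnerProductSpace ℂ V] [FiniteDimensional ℂ V]
    (φ : V →ₗ[ℂ] V) (hφ : LinearMap.IsSymmetric φ)
    (μ ν : ℝ) (hμ : Module.End.HasEigenvalue φ (μ : ℂ))
    (hν : Module.End.HasEigenvalue φ (ν : ℂ)) (hμν : μ < ν)
    (u : V) (hu : u ∈ Module.End.eigenspace φ (μ : ℂ)) (hu0 : u ≠ 0)
    (w : V) (hw : w ∈ Module.End.eigenspace φ (ν : ℂ)) (hw0 : w ≠ 0) :
    ∃ hz : u + w ≠ 0,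
      Tendsto (fun t : ℝ => projFlow φ t (Projectivization.mk ℂ (u + w) hz)) atBot
        (nhds (Projectivization.mk ℂ u hu0)) ∧
      Tendsto (fun t : ℝ => projFlow φ t (Projectivization.mk ℂ (u + w) hz)) atTop
        (nhds (Projectivization.mk ℂ w hw0)) ∧
      ({y : ℙ ℂ V | Tendsto (fun t : ℝ => projFlow φ t y) atBot
            (nhds (Projectivization.mk ℂ u hu0))} ∩
        {y : ℙ ℂ V | Tendsto (fun t : ℝ => projFlow φ t y) atTop
            (nhds (Projectivization.mk ℂ w hw0))}).Nonempty :=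
  projFlow_connecting_orbit_general φ μ ν hμν u hu hu0 w hw hw0
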